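/- arXiv:2602.11029 — 6 statements merged into one kernel-verified Lean document; each statement's English description precedes it below -/
import Mathlib

section
/- Let π be a permutation of {0,…,n−1} and S the set of run starts of π (positions i with i=0 or π(i−1)+1 ≠ π(i)). Then the set S_π = {π(i) : i ∈ S} also has cardinality |S|, and the images of the runs of π, namely the intervals [π(s), π(s) + ℓ_s) where ℓ_s is the length of the run starting at s, are pairwise disjoint and partition {0,…,n−1}. -/
/-!
The run starts `S` cut `{0,…,n-1}` into the consecutive blocks `[s, s + ℓ_s)`, `s ∈ S`.
By definition of a run, `π` shifts each block rigidly onto `[π s, π s + ℓ_s)`, so the output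
intervals are the images of the blocks under the bijection `π`, and images of a partition under
a bijection again form a partition.
-/

/-- The set of run starts of the permutation `π` of `{0,…,n-1}`. -/
def runStarts (n : ℕ) (π : ℕ → ℕ) : Finset ℕ :=
  (Finset.range n).filter (fun i => i = 0 ∨ π (i - 1) + 1 ≠ π i)

/-- Length of the run starting at `s`: distance to the next run start (or to `n`). -/
noncomputable def runLen (n : ℕ) (S : Finset ℕ) (s : ℕ) : ℕ :=
  sInf ({t : ℕ | t ∈ S ∧ s < t} ∪ {n}) - s

open Finset

section RunLen

variable {n : ℕ} {S : Finset ℕ} {s t : ℕ}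

lemma add_runLen_le_of_mem (ht : t ∈ S) (hst : s < t) : s + runLen n S s ≤ t := by
  have : sInf ({t : ℕ | t ∈ S ∧ s < t} ∪ {n}) ≤ t := Nat.sInf_le (Or.inl ⟨ht, hst⟩)
  unfold runLen; omega

lemma add_runLen_le (hs : s < n) : s + runLen n S s ≤ n := by
  have : sInf ({t : ℕ | t ∈ S ∧ s < t} ∪ {n}) ≤ n := Nat.sInf_le (Or.inr rfl)
  unfold runLen; omega

lemma add_runLen_mem_or_eq (hs : s < n) :
    (s + runLen n S s ∈ S ∧ s < s + runLen n S s) ∨ s + runLen n S s = n := by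
  rcases Nat.sInf_mem (s := {t : ℕ | t ∈ S ∧ s < t} ∪ {n}) ⟨n, Or.inr rfl⟩ with h | h
  · left; unfold runLen; rw [Nat.add_sub_cancel' h.2.le]; exact ⟨h.1, h.2⟩
  · right; rw [Set.mem_singleton_iff] at h; unfold runLen; omega

lemma Ico_runLen_subset_range (hs : s < n) : Ico s (s + runLen n S s) ⊆ range n :=
  fun _ hi => mem_range.mpr ((mem_Ico.mp hi).2.trans_le (add_runLen_le hs))

lemma notMem_of_lt_add_runLen (hst : s < t) (ht : t < s + runLen n S s) : t ∉ S :=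
  fun htS => (add_runLen_le_of_mem htS hst).not_gt ht

lemma pairwiseDisjoint_Ico_runLen :
    (S : Set ℕ).PairwiseDisjoint (fun s => Ico s (s + runLen n S s)) := by
  intro s hs t ht hst
  rcases hst.lt_or_gt with h | h
  · exact Ico_disjoint_Ico_consecutive s _ _ |>.mono_right
      (Ico_subset_Ico_left (add_runLen_le_of_mem ht h))
  · exact (Ico_disjoint_Ico_consecutive t _ _ |>.mono_right
      (Ico_subset_Ico_left (add_runLen_le_of_mem hs h))).symm

/-- The run containing `i` starts at the last element of `S` not exceeding `i`. -/
lemma biUnion_Ico_runLen (hS : S ⊆ range n) (h0 : 0 < n → 0 ∈ S) :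
    S.biUnion (fun s => Ico s (s + runLen n S s)) = range n := by
  refine (biUnion_subset.mpr fun s hs => Ico_runLen_subset_range (mem_range.mp (hS hs))).antisymm ?_
  intro i hi
  rw [mem_range] at hi
  set T := S.filter (· ≤ i)
  have hT : T.Nonempty := ⟨0, mem_filter.mpr ⟨h0 (i.zero_le.trans_lt hi), i.zero_le⟩⟩
  obtain ⟨hsS, hsi⟩ := mem_filter.mp (T.max'_mem hT)
  refine mem_biUnion.mpr ⟨T.max' hT, hsS, mem_Ico.mpr ⟨hsi, ?_⟩⟩
  by_contra! hle
  rcases add_runLen_mem_or_eq (S := S) (hsi.trans_lt hi) with ⟨hmem, hlt⟩ | heq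
  · exact hlt.not_ge (T.le_max' _ (mem_filter.mpr ⟨hmem, hle⟩))
  · omega

end RunLen

section Runs

variable {n : ℕ} {π : ℕ → ℕ} {s : ℕ}

lemma mem_runStarts {i : ℕ} : i ∈ runStarts n π ↔ i < n ∧ (i = 0 ∨ π (i - 1) + 1 ≠ π i) := by
  simp [runStarts]

lemma runStarts_subset_range : runStarts n π ⊆ range n := filter_subset _ _

lemma zero_mem_runStarts (hn : 0 < n) : 0 ∈ runStarts n π :=
  mem_runStarts.mpr ⟨hn, Or.inl rfl⟩

lemma apply_add_of_lt_runLen (hs : s ∈ runStarts n π) {k : ℕ}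
    (hk : k < runLen n (runStarts n π) s) : π (s + k) = π s + k := by
  induction k with
  | zero => rfl
  | succ k ih =>
    have hlt : s + (k + 1) < n :=
      (Nat.add_lt_add_left hk s).trans_le (add_runLen_le (mem_runStarts.mp hs).1)
    have hnot := notMem_of_lt_add_runLen (by omega) (Nat.add_lt_add_left hk s)
    simp only [mem_runStarts, not_and, not_or] at hnot
    have hstep : π (s + k) + 1 = π (s + (k + 1)) := by simpa using (hnot hlt).2
    rw [← hstep, ih (by omega)]; rfl

lemma image_Ico_runLen (hs : s ∈ runStarts n π) :
    (Ico s (s + runLen n (runStarts n π) s)).image π =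
      Ico (π s) (π s + runLen n (runStarts n π) s) := by
  set L := runLen n (runStarts n π) s
  calc (Ico s (s + L)).image π
      = (Ico 0 L).image (π ∘ (s + ·)) := by rw [← image_image, image_add_left_Ico, add_zero]
    _ = (Ico 0 L).image (π s + ·) :=
        image_congr fun k hk => apply_add_of_lt_runLen hs (mem_Ico.mp hk).2
    _ = Ico (π s) (π s + L) := by rw [image_add_left_Ico, add_zero]

end Runs

lemma Finset.disjoint_image_of_injOn {α β : Type*} [DecidableEq β] {f : α → β}
    {s t u : Finset α} (hf : Set.InjOn f u) (hs : s ⊆ u) (ht : t ⊆ u) (h : Disjoint s t) :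
    Disjoint (s.image f) (t.image f) := by
  rw [← disjoint_coe, coe_image, coe_image]
  exact (disjoint_coe.mpr h).image hf (coe_subset.mpr hs) (coe_subset.mpr ht)

theorem statement_2_general (n : ℕ) (π : ℕ → ℕ)
    (hπ : Set.BijOn π (Set.Iio n) (Set.Iio n)) :
    ((runStarts n π).image π).card = (runStarts n π).card ∧
    (↑(runStarts n π) : Set ℕ).PairwiseDisjoint
      (fun s => Finset.Ico (π s) (π s + runLen n (runStarts n π) s)) ∧
    (runStarts n π).biUnion
      (fun s => Finset.Ico (π s) (π s + runLen n (runStarts n π) s)) = Finset.range n := by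
  set S := runStarts n π
  have hinj : Set.InjOn π (range n) := by simpa [Set.Iio_def] using hπ.injOn
  have hblock : ∀ s ∈ S, Ico s (s + runLen n S s) ⊆ range n := fun s hs =>
    Ico_runLen_subset_range (mem_range.mp (runStarts_subset_range hs))
  refine ⟨card_image_of_injOn (hinj.mono (coe_subset.mpr runStarts_subset_range)), ?_, ?_⟩
  · intro s hs t ht hst
    rw [Function.onFun, ← image_Ico_runLen (mem_coe.mp hs), ← image_Ico_runLen (mem_coe.mp ht)]
    exact disjoint_image_of_injOn hinj (hblock s hs) (hblock t ht)
      (pairwiseDisjoint_Ico_runLen hs ht hst)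
  · rw [← biUnion_congr rfl fun s hs => image_Ico_runLen hs, ← biUnion_image,
      biUnion_Ico_runLen runStarts_subset_range zero_mem_runStarts, ← coe_inj,
      coe_image, coe_range, hπ.image_eq]

/-- `S_π = π(S)` has cardinality `|S|`, and the output intervals
`[π s, π s + ℓ_s)` are pairwise disjoint and partition `{0,…,n-1}`. -/
theorem statement_2 (n : ℕ) (hn : 0 < n) (π : ℕ → ℕ)
    (hπ : Set.BijOn π (Set.Iio n) (Set.Iio n)) :
    ((runStarts n π).image π).card = (runStarts n π).card ∧
    (↑(runStarts n π) : Set ℕ).PairwiseDisjoint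
      (fun s => Finset.Ico (π s) (π s + runLen n (runStarts n π) s)) ∧
    (runStarts n π).biUnion
      (fun s => Finset.Ico (π s) (π s + runLen n (runStarts n π) s)) = Finset.range n :=
  statement_2_general n π hπ
end

section
/- Let π be a permutation of {0,…,n−1} with r runs, length capped with constant c > 0 so that each run has length at most L = c·n/r and the number of runs is r' ≤ r + r/c. Then the total number of fast forwards over all n distinct move queries is at most L·r' ≤ c·n + n, hence the average number of fast forwards per query is at most c + 1. -/
/-- Predecessor of `i` among the interval starts `S`. -/
noncomputable def predIn (S : Finset ℕ) (i : ℕ) : ℕ :=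
  sSup {s : ℕ | s ∈ S ∧ s ≤ i}

/-- Number of interval starts lying in the output interval of the piece starting at `s`. -/
noncomputable def ffCount (n : ℕ) (π : ℕ → ℕ) (S : Finset ℕ) (s : ℕ) : ℕ :=
  (S.filter (fun t => π s ≤ t ∧ t < π s + runLen n S s)).card

/-!
Every query in the piece starting at `s` costs `ffCount s` fast forwards, and there are
`runLen s ≤ L` such queries. Inside a piece `π` increases by one at each step, so the
output interval of a piece is the image of the piece itself; injectivity of `π` makes
the output intervals pairwise disjoint, hence the counts `ffCount s` add up to at most
`r' = #S'`. The total is therefore at most `L · r' ≤ (c n / r) (r + r / c) = c n + n`.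
-/

open Finset

noncomputable def pieceEnd (n : ℕ) (S : Finset ℕ) (s : ℕ) : ℕ :=
  sInf ({t : ℕ | t ∈ S ∧ s < t} ∪ {n})

section Pieces

variable {n : ℕ} {S : Finset ℕ}

lemma runLen_eq_pieceEnd_sub (s : ℕ) : runLen n S s = pieceEnd n S s - s := rfl

lemma pieceEnd_le (s : ℕ) : pieceEnd n S s ≤ n :=
  Nat.sInf_le (Or.inr rfl)

lemma pieceEnd_mem_or_eq (s : ℕ) :
    (pieceEnd n S s ∈ S ∧ s < pieceEnd n S s) ∨ pieceEnd n S s = n :=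
  Nat.sInf_mem (⟨n, Or.inr rfl⟩ : ({t : ℕ | t ∈ S ∧ s < t} ∪ {n}).Nonempty)

lemma pieceEnd_le_of_mem {s t : ℕ} (ht : t ∈ S) (hst : s < t) : pieceEnd n S s ≤ t :=
  Nat.sInf_le (Or.inl ⟨ht, hst⟩)

lemma bddAbove_mem_and_le (i : ℕ) : BddAbove {s : ℕ | s ∈ S ∧ s ≤ i} :=
  ⟨i, fun _ h => h.2⟩

lemma le_predIn {s i : ℕ} (hs : s ∈ S) (hsi : s ≤ i) : s ≤ predIn S i :=
  le_csSup (bddAbove_mem_and_le i) ⟨hs, hsi⟩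

lemma lt_pieceEnd_predIn {i : ℕ} (hi : i < n) : i < pieceEnd n S (predIn S i) := by
  by_contra! hle
  rcases pieceEnd_mem_or_eq (n := n) (S := S) (predIn S i) with ⟨hmem, hlt⟩ | hend
  · exact hlt.not_ge (le_predIn hmem hle)
  · exact hi.not_ge (hend ▸ hle)

variable (h0 : 0 ∈ S)
include h0

lemma predIn_mem_and_le (i : ℕ) : predIn S i ∈ S ∧ predIn S i ≤ i :=
  Nat.sSup_mem (s := {s | s ∈ S ∧ s ≤ i}) ⟨0, h0, i.zero_le⟩ (bddAbove_mem_and_le i)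

lemma predIn_eq_iff {i s : ℕ} (hi : i < n) (hs : s ∈ S) :
    predIn S i = s ↔ s ≤ i ∧ i < pieceEnd n S s := by
  refine ⟨fun h => h ▸ ⟨(predIn_mem_and_le h0 i).2, lt_pieceEnd_predIn hi⟩,
    fun ⟨hsi, hi'⟩ => ?_⟩
  obtain ⟨hp, hpi⟩ := predIn_mem_and_le h0 i
  refine ((le_predIn hs hsi).eq_or_lt.resolve_right fun hlt => ?_).symm
  exact (hi'.trans_le (pieceEnd_le_of_mem hp hlt)).not_ge hpi

lemma filter_predIn_eq {s : ℕ} (hs : s ∈ S) :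
    (range n).filter (fun i => predIn S i = s) = Ico s (pieceEnd n S s) := by
  ext i
  simp only [mem_filter, mem_range, mem_Ico]
  refine ⟨fun ⟨hi, hp⟩ => (predIn_eq_iff h0 hi hs).mp hp, fun h => ?_⟩
  have hi : i < n := h.2.trans_le (pieceEnd_le s)
  exact ⟨hi, (predIn_eq_iff h0 hi hs).mpr h⟩

lemma sum_range_comp_predIn (f : ℕ → ℕ) :
    ∑ i ∈ range n, f (predIn S i) = ∑ s ∈ S, runLen n S s * f s := by
  rw [← sum_fiberwise_of_maps_to (g := predIn S) fun i _ => (predIn_mem_and_le h0 i).1]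
  refine sum_congr rfl fun s hs => ?_
  rw [sum_congr rfl fun i hi => congrArg f (mem_filter.mp hi).2, sum_const,
    filter_predIn_eq h0 hs, Nat.card_Ico, smul_eq_mul, runLen_eq_pieceEnd_sub]

end Pieces

section Permutation

variable {n : ℕ} {π : ℕ → ℕ} {S : Finset ℕ} (hsplit : runStarts n π ⊆ S)
include hsplit

lemma apply_eq_add_of_le_of_lt_pieceEnd {s i : ℕ} (hsi : s ≤ i) (hi : i < pieceEnd n S s) :
    π i = π s + (i - s) := by
  induction i, hsi using Nat.le_induction with
  | base => simp
  | succ k hsk ih =>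
    have hkn : k + 1 < n := hi.trans_le (pieceEnd_le s)
    have hstart : k + 1 ∉ runStarts n π := fun h =>
      (pieceEnd_le_of_mem (hsplit h) (Nat.lt_succ_of_le hsk)).not_gt hi
    have hstep : π k + 1 = π (k + 1) := by simpa [runStarts, hkn] using hstart
    have := ih (by omega)
    omega

lemma image_Ico_pieceEnd (s : ℕ) :
    (Ico s (pieceEnd n S s)).image π = Ico (π s) (π s + runLen n S s) := by
  ext y
  simp only [mem_image, mem_Ico, runLen_eq_pieceEnd_sub]
  constructor
  · rintro ⟨i, ⟨hsi, hi⟩, rfl⟩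
    rw [apply_eq_add_of_le_of_lt_pieceEnd hsplit hsi hi]
    omega
  · rintro ⟨hy, hy'⟩
    have hi : s + (y - π s) < pieceEnd n S s := by omega
    refine ⟨s + (y - π s), ⟨by omega, hi⟩, ?_⟩
    rw [apply_eq_add_of_le_of_lt_pieceEnd hsplit (by omega) hi]
    omega

lemma pairwiseDisjoint_output (hπ : Set.InjOn π (Set.Iio n)) :
    (S : Set ℕ).PairwiseDisjoint fun s => Ico (π s) (π s + runLen n S s) := by
  intro s hs t ht hst
  simp only [← image_Ico_pieceEnd hsplit, Function.onFun, disjoint_left, mem_image, mem_Ico]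
  rintro _ ⟨i, ⟨hsi, his⟩, rfl⟩ ⟨j, ⟨htj, hjt⟩, hji⟩
  obtain rfl : j = i := hπ (hjt.trans_le (pieceEnd_le t)) (his.trans_le (pieceEnd_le s)) hji
  rcases Ne.lt_or_gt hst with h | h
  · exact (his.trans_le (pieceEnd_le_of_mem ht h)).not_ge htj
  · exact (hjt.trans_le (pieceEnd_le_of_mem hs h)).not_ge hsi

lemma sum_ffCount_le_card (hπ : Set.InjOn π (Set.Iio n)) :
    ∑ s ∈ S, ffCount n π S s ≤ #S := by
  have hdisj : (S : Set ℕ).PairwiseDisjoint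
      fun s => S.filter (· ∈ Ico (π s) (π s + runLen n S s)) :=
    fun s hs t ht hst => disjoint_filter.mpr fun _ _ hx hx' =>
      disjoint_left.mp (pairwiseDisjoint_output hsplit hπ hs ht hst) hx hx'
  calc ∑ s ∈ S, ffCount n π S s
      = ∑ s ∈ S, #(S.filter (· ∈ Ico (π s) (π s + runLen n S s))) := by
        simp only [ffCount, mem_Ico]
    _ = #(S.biUnion fun s => S.filter (· ∈ Ico (π s) (π s + runLen n S s))) :=
        (card_biUnion hdisj).symm
    _ ≤ #S := card_le_card (biUnion_subset.mpr fun _ _ => filter_subset _ _)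

end Permutation

theorem statement_4_general (n L : ℕ) (hn : 0 < n) (c : ℝ) (hc : 0 < c) (π : ℕ → ℕ)
    (hπ : Set.BijOn π (Set.Iio n) (Set.Iio n))
    (S' : Finset ℕ)
    (hsplit : runStarts n π ⊆ S')
    (hcap : ∀ s ∈ S', runLen n S' s ≤ L)
    (hLle : (L : ℝ) ≤ c * n / (runStarts n π).card)
    (hr' : (S'.card : ℝ) ≤ ((runStarts n π).card : ℝ) + ((runStarts n π).card : ℝ) / c) :
    ((∑ i ∈ Finset.range n, ffCount n π S' (predIn S' i) : ℕ) : ℝ) ≤ c * n + n ∧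
    ((∑ i ∈ Finset.range n, ffCount n π S' (predIn S' i) : ℕ) : ℝ) / n ≤ c + 1 := by
  have hstart : 0 ∈ runStarts n π := by simp [runStarts, hn]
  have htotal : ∑ i ∈ range n, ffCount n π S' (predIn S' i) ≤ L * #S' := by
    rw [sum_range_comp_predIn (hsplit hstart)]
    calc ∑ s ∈ S', runLen n S' s * ffCount n π S' s
        ≤ ∑ s ∈ S', L * ffCount n π S' s :=
          sum_le_sum fun s hs => Nat.mul_le_mul_right _ (hcap s hs)
      _ = L * ∑ s ∈ S', ffCount n π S' s := (mul_sum _ _ _).symm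
      _ ≤ L * #S' := Nat.mul_le_mul_left _ (sum_ffCount_le_card hsplit hπ.injOn)
  have hr : (0 : ℝ) < #(runStarts n π) := by exact_mod_cast card_pos.mpr ⟨0, hstart⟩
  have hbound : ((∑ i ∈ range n, ffCount n π S' (predIn S' i) : ℕ) : ℝ) ≤ c * n + n :=
    calc _ ≤ (L : ℝ) * #S' := by exact_mod_cast htotal
      _ ≤ c * n / #(runStarts n π) * (#(runStarts n π) + #(runStarts n π) / c) :=
        mul_le_mul hLle hr' (by positivity) (by positivity)
      _ = c * n + n := by field_simp
  exact ⟨hbound, (div_le_iff₀ (by exact_mod_cast hn)).mpr (by linarith)⟩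

/-- After length capping with constant `c` (each piece of length at most `L = c·n/r`,
at most `r + r/c` pieces), the total number of fast forwards over all `n` distinct move
queries is at most `c·n + n`, hence at most `c + 1` per query on average. -/
theorem statement_4 (n L : ℕ) (hn : 0 < n) (c : ℝ) (hc : 0 < c) (π : ℕ → ℕ)
    (hπ : Set.BijOn π (Set.Iio n) (Set.Iio n))
    (S' : Finset ℕ)
    (hsplit : runStarts n π ⊆ S') (hsub : S' ⊆ Finset.range n)
    (hcap : ∀ s ∈ S', runLen n S' s ≤ L)
    (hLle : (L : ℝ) ≤ c * n / (runStarts n π).card)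
    (hr' : (S'.card : ℝ) ≤ ((runStarts n π).card : ℝ) + ((runStarts n π).card : ℝ) / c) :
    ((∑ i ∈ Finset.range n, ffCount n π S' (predIn S' i) : ℕ) : ℝ) ≤ c * n + n ∧
    ((∑ i ∈ Finset.range n, ffCount n π S' (predIn S' i) : ℕ) : ℝ) / n ≤ c + 1 :=
  statement_4_general n L hn c hc π hπ S' hsplit hcap hLle hr'
end

section
/- Let SA be the suffix array of a text T of length n with unique terminator, and define φ on {0,…,n−1} by φ(SA[i]) = SA[(i−1) mod n]. Then for any i with 0 ≤ i < n−1, if LF(i+1) = LF(i)+1, then φ(SA[i+1]) = φ(SA[i+1] − 1) + 1. Consequently, φ has at most r contiguously permuted runs, where r is the number of runs of the BWT. -/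
/-!
Unfolding `φ` and `LF` around a position where `LF` increases by one gives
`φ(SA[j]) = SA[j-1] = SA[LF(j-1)] + 1 = SA[LF(j) - 1] + 1 = φ(SA[LF j]) + 1 = φ(SA[j] - 1) + 1`.
Hence `SA⁻¹` maps every break of a run of `φ` injectively to a break of a run of `LF`,
and `LF` can only break at the head of a run of the BWT.
-/

section PhiRuns

variable {G : Type*} [AddGroup G] [One G] (SA : Equiv.Perm G) {LF phi : G → G}

theorem phi_eq_phi_sub_one_add_one_of_LF (hLF : ∀ i, SA (LF i) = SA i - 1)
    (hphi : ∀ i, phi (SA i) = SA (i - 1)) {j : G} (h : LF j = LF (j - 1) + 1) :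
    phi (SA j) = phi (SA j - 1) + 1 :=
  calc phi (SA j) = SA (j - 1) := hphi j
    _ = SA (LF (j - 1)) + 1 := by rw [hLF, sub_add_cancel]
    _ = SA (LF j - 1) + 1 := by rw [h, add_sub_cancel_right]
    _ = phi (SA (LF j)) + 1 := by rw [hphi]
    _ = phi (SA j - 1) + 1 := by rw [hLF]

theorem card_phi_breaks_le_card_LF_breaks [Fintype G] [DecidableEq G]
    (hLF : ∀ i, SA (LF i) = SA i - 1) (hphi : ∀ i, phi (SA i) = SA (i - 1)) :
    (Finset.univ.filter fun x => phi (x - 1) + 1 ≠ phi x).card ≤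
      (Finset.univ.filter fun j => LF j ≠ LF (j - 1) + 1).card := by
  refine Finset.card_le_card_of_injOn SA.symm (fun x hx => ?_) SA.symm.injective.injOn
  simp only [Finset.coe_filter, Finset.mem_univ, true_and, Set.mem_ofPred_eq] at hx ⊢
  intro hrun
  have hstep := phi_eq_phi_sub_one_add_one_of_LF SA hLF hphi hrun
  rw [Equiv.apply_symm_apply] at hstep
  exact hx hstep.symm

end PhiRuns

/-- If `LF(i+1) = LF(i) + 1` then `φ(SA[i+1]) = φ(SA[i+1] − 1) + 1` (arithmetic mod `n`
in `Fin n`); consequently `φ` has at most `r` contiguously permuted runs, where `r` is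
the number of equal-character runs of the BWT. -/
theorem statement_7 {α : Type*} [DecidableEq α] (n : ℕ) [NeZero n]
    (SA : Equiv.Perm (Fin n)) (LF phi : Fin n → Fin n)
    (hLF : ∀ i : Fin n, SA (LF i) = SA i - 1)
    (hphi : ∀ i : Fin n, phi (SA i) = SA (i - 1))
    (BWT : Fin n → α)
    (hBWTrun : ∀ j : Fin n, j ≠ 0 → BWT (j - 1) = BWT j → LF j = LF (j - 1) + 1) :
    (∀ i : Fin n, (i : ℕ) + 1 < n → LF (i + 1) = LF i + 1 →
      phi (SA (i + 1)) = phi (SA (i + 1) - 1) + 1) ∧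
    (Finset.univ.filter (fun x : Fin n => phi (x - 1) + 1 ≠ phi x)).card ≤
      (Finset.univ.filter (fun j : Fin n => j = 0 ∨ BWT (j - 1) ≠ BWT j)).card := by
  refine ⟨fun i _ h => phi_eq_phi_sub_one_add_one_of_LF SA hLF hphi ?_, ?_⟩
  · rwa [add_sub_cancel_right]
  · refine (card_phi_breaks_le_card_LF_breaks SA hLF hphi).trans (Finset.card_le_card ?_)
    intro j
    simp only [Finset.mem_filter, Finset.mem_univ, true_and]
    contrapose!
    exact fun ⟨hj, hBWT⟩ => hBWTrun j hj hBWT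
end

section
/- Let π be a permutation of {0,…,n−1} with run-start set S of size r. The number of runs after length capping with parameter c, namely r' = Σ_{j} ⌈ℓ_j / L⌉ where ℓ_j are the run lengths and L = ⌈c·n/r⌉, satisfies r ≤ r' ≤ r + ⌊n/L⌋ ≤ r + r/c. -/
/-!
Each run of length `ℓ ≥ 1` is cut into `⌈ℓ / L⌉ = 1 + ⌊(ℓ - 1) / L⌋` pieces, so the total exceeds `r`
by `∑ ⌊(ℓ_j - 1) / L⌋ ≤ ⌊n / L⌋`; and since `L ≥ c n / r`, we get `n / L ≤ r / c`.
-/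

open Finset

theorem Nat.add_sub_one_div_eq {a L : ℕ} (ha : 0 < a) (hL : 0 < L) :
    (a + L - 1) / L = (a - 1) / L + 1 := by
  rw [show a + L - 1 = a - 1 + L by omega, Nat.add_div_right _ hL]

theorem Finset.sum_nat_div_le_sum_div {ι : Type*} (s : Finset ι) (f : ι → ℕ) {L : ℕ}
    (hL : 0 < L) : ∑ i ∈ s, f i / L ≤ (∑ i ∈ s, f i) / L :=
  (Nat.le_div_iff_mul_le hL).2 <| by
    rw [Finset.sum_mul]
    exact Finset.sum_le_sum fun i _ => Nat.div_mul_le_self _ _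

section CeilDiv

variable {ι : Type*} (s : Finset ι) {ℓ : ι → ℕ} {L : ℕ}

theorem sum_add_sub_one_div_eq (hpos : ∀ i ∈ s, 0 < ℓ i) (hL : 0 < L) :
    ∑ i ∈ s, (ℓ i + L - 1) / L = #s + ∑ i ∈ s, (ℓ i - 1) / L := by
  rw [sum_congr rfl fun i hi => Nat.add_sub_one_div_eq (hpos i hi) hL, sum_add_distrib,
    card_eq_sum_ones, add_comm]

theorem card_le_sum_add_sub_one_div (hpos : ∀ i ∈ s, 0 < ℓ i) (hL : 0 < L) :
    #s ≤ ∑ i ∈ s, (ℓ i + L - 1) / L := by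
  rw [sum_add_sub_one_div_eq s hpos hL]
  exact Nat.le_add_right _ _

theorem sum_add_sub_one_div_le (hpos : ∀ i ∈ s, 0 < ℓ i) (hL : 0 < L) :
    ∑ i ∈ s, (ℓ i + L - 1) / L ≤ #s + (∑ i ∈ s, ℓ i) / L := by
  rw [sum_add_sub_one_div_eq s hpos hL]
  gcongr
  calc ∑ i ∈ s, (ℓ i - 1) / L
      ≤ (∑ i ∈ s, (ℓ i - 1)) / L := s.sum_nat_div_le_sum_div _ hL
    _ ≤ (∑ i ∈ s, ℓ i) / L := by gcongr with i; exact Nat.sub_le _ _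

end CeilDiv

theorem Nat.cast_div_ceil_le {n r : ℕ} {c : ℝ} (hn : 0 < n) (hr : 0 < r) (hc : 0 < c) :
    ((n / ⌈c * n / r⌉₊ : ℕ) : ℝ) ≤ r / c := by
  have hcnr : 0 < c * n / r := by positivity
  calc ((n / ⌈c * n / r⌉₊ : ℕ) : ℝ)
      ≤ n / (⌈c * n / r⌉₊ : ℝ) := Nat.cast_div_le
    _ ≤ n / (c * n / r) := div_le_div_of_nonneg_left (by positivity) hcnr (Nat.le_ceil _)
    _ = r / c := by field_simp

/-- The number of runs after length capping with parameter `c`, namely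
`r' = Σ_j ⌈ℓ_j / L⌉` with `L = ⌈c·n/r⌉`, satisfies `r ≤ r' ≤ r + ⌊n/L⌋ ≤ r + r/c`. -/
theorem statement_11 (n r : ℕ) (hn : 0 < n) (hr : 0 < r) (c : ℝ) (hc : 0 < c)
    (ℓ : Fin r → ℕ) (hpos : ∀ j, 0 < ℓ j) (hsum : (∑ j, ℓ j) = n)
    (L : ℕ) (hL : L = ⌈c * n / r⌉₊) :
    r ≤ (∑ j, (ℓ j + L - 1) / L) ∧
    (∑ j, (ℓ j + L - 1) / L) ≤ r + n / L ∧
    ((∑ j, (ℓ j + L - 1) / L : ℕ) : ℝ) ≤ (r : ℝ) + (r : ℝ) / c := by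
  have hLpos : 0 < L := hL ▸ Nat.ceil_pos.2 (by positivity)
  have hpos' : ∀ j ∈ univ, 0 < ℓ j := fun j _ => hpos j
  have hlower := card_le_sum_add_sub_one_div univ hpos' hLpos
  have hupper := sum_add_sub_one_div_le univ hpos' hLpos
  rw [card_univ, Fintype.card_fin] at hlower hupper
  rw [hsum] at hupper
  refine ⟨hlower, hupper, ?_⟩
  calc ((∑ j, (ℓ j + L - 1) / L : ℕ) : ℝ)
      ≤ r + ((n / L : ℕ) : ℝ) := by exact_mod_cast hupper
    _ ≤ r + r / c := by
        gcongr
        exact hL ▸ Nat.cast_div_ceil_le hn hr hc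
end

section
/- Brown–Gagie–Rossi worst case: there exists, for infinitely many n, a permutation π of {0,…,n−1} with r ∈ Θ(√n) runs (formed from a single cycle) such that the total number of fast forwards over all n distinct move queries of the unbalanced move structure is Θ(n·r), i.e., the average cost per query is Θ(r). -/
/-- Rank (number of run starts `≤ x`). -/
def rankIn (S : Finset ℕ) (x : ℕ) : ℕ :=
  (S.filter (fun s => s ≤ x)).card

/-- Fast forwards of the move query at position `i` in the unbalanced move structure:
the scan distance from the rank of the predecessor of the run-start image to the rank
of the predecessor of `π i`. -/
noncomputable def ffQuery (n : ℕ) (π : ℕ → ℕ) (i : ℕ) : ℕ :=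
  rankIn (runStarts n π) (π i) - rankIn (runStarts n π) (π (predIn (runStarts n π) i))

/-! Take `n = m²` with `m` even. The permutation sends the first `m` positions, each a run of
length one, onto the top block `[m² - m, m²)` in an order `headOrder m` without ascents by one,
and the remaining positions form a single run shifted down by `m`. So the run starts are
`0, 1, …, m` (`r = m + 1`), and a query at a position `i ≥ 2m` of the long run, whose head `m`
is sent to `0`, lands at `i - m ≥ m` and costs `m` fast forwards: the total is
`Θ(m³) = Θ(n r)`. The permutation is one cycle because `m` of its steps act on `[0, m)` as
`headOrder m`, itself one cycle, and every orbit meets `[0, m)`. -/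

open Function Set

section PeriodicOrbit

variable {α : Type*} {f : α → α} {a : α} {p : ℕ}

theorem exists_iterate_apply_eq_of_isPeriodicPt (hp : IsPeriodicPt f p a) (hp0 : 0 < p)
    (i j : ℕ) : ∃ k, f^[k] (f^[i] a) = f^[j] a := by
  refine ⟨(p - 1) * i + j, ?_⟩
  obtain ⟨q, rfl⟩ : ∃ q, p = q + 1 := ⟨p - 1, by omega⟩
  rw [← iterate_add_apply, show (q + 1 - 1) * i + j + i = j + (q + 1) * i by
    rw [Nat.add_sub_cancel]; ring, iterate_add_apply, (hp.mul_const i).eq]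

theorem surjOn_of_isPeriodicPt {s : Set α} (hf : MapsTo f s s) (ha : a ∈ s)
    (hp : IsPeriodicPt f p a) (hp0 : 0 < p) (hcover : ∀ y ∈ s, ∃ k, f^[k] a = y) :
    SurjOn f s s := by
  intro y hy
  obtain ⟨k, rfl⟩ := hcover y hy
  refine ⟨f^[k + p - 1] a, hf.iterate _ ha, ?_⟩
  rw [← iterate_succ_apply' f, show (k + p - 1).succ = k + p by omega, iterate_add_apply, hp.eq]

end PeriodicOrbit

theorem rankIn_range_succ (m x : ℕ) : rankIn (Finset.range (m + 1)) x = min x m + 1 := by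
  rw [rankIn, show (Finset.range (m + 1)).filter (· ≤ x) = Finset.range (min x m + 1) by
    ext a; simp only [Finset.mem_filter, Finset.mem_range]; omega, Finset.card_range]

theorem predIn_range_succ (m i : ℕ) : predIn (Finset.range (m + 1)) i = min i m := by
  rw [predIn, show {s : ℕ | s ∈ Finset.range (m + 1) ∧ s ≤ i} = Iic (min i m) by
    ext s; simp only [Finset.mem_range, mem_Iic, mem_ofPred_eq]; omega, csSup_Iic]

theorem ffQuery_of_runStarts_eq_range {n m : ℕ} {π : ℕ → ℕ}
    (h : runStarts n π = Finset.range (m + 1)) (i : ℕ) :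
    ffQuery n π i = min (π i) m - min (π (min i m)) m := by
  rw [ffQuery, h, predIn_range_succ, rankIn_range_succ, rankIn_range_succ, Nat.add_sub_add_right]

theorem ffQuery_le_of_runStarts_eq_range {n m : ℕ} {π : ℕ → ℕ}
    (h : runStarts n π = Finset.range (m + 1)) (i : ℕ) : ffQuery n π i ≤ m := by
  rw [ffQuery_of_runStarts_eq_range h]
  exact (Nat.sub_le _ _).trans (min_le_right _ _)

theorem sum_ffQuery_le_of_runStarts_eq_range {n m : ℕ} {π : ℕ → ℕ}
    (h : runStarts n π = Finset.range (m + 1)) :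
    ∑ i ∈ Finset.range n, ffQuery n π i ≤ n * m := by
  simpa using Finset.sum_le_card_nsmul (Finset.range n) _ _ fun i _ =>
    ffQuery_le_of_runStarts_eq_range h i

-- For even `m`, the orbit of `0` is `0, 3, 2, 5, 4, …, m - 1, m - 2, 1`.
def headOrder (m j : ℕ) : ℕ := if j % 2 = 1 then j - 1 else if j = m - 2 then 1 else j + 3

def worstCasePerm (m i : ℕ) : ℕ := if i < m then (m - 1) * m + headOrder m i else i - m

section HeadOrder

variable {m : ℕ}

theorem mapsTo_headOrder (hm2 : m % 2 = 0) :
    MapsTo (headOrder m) (Iio m) (Iio m) := by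
  intro j hj
  simp only [mem_Iio, headOrder] at hj ⊢
  split_ifs <;> omega

theorem headOrder_add_one_ne (hm4 : m ≠ 4) {j : ℕ} (hj : j + 1 < m) :
    headOrder m j + 1 ≠ headOrder m (j + 1) := by
  unfold headOrder; split_ifs <;> omega

theorem iterate_headOrder_zero_of_even {e : ℕ} (he : e % 2 = 0)
    (hem : e < m) : (headOrder m)^[e] 0 = e := by
  obtain ⟨k, rfl⟩ : ∃ k, e = 2 * k := ⟨e / 2, by omega⟩
  induction k with
  | zero => rfl
  | succ k ih =>
    rw [show 2 * (k + 1) = 2 * k + 1 + 1 by ring, iterate_succ_apply', iterate_succ_apply',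
      ih (by omega) (by omega)]
    unfold headOrder; split_ifs <;> omega

theorem iterate_headOrder_zero_succ_of_even {e : ℕ} (he : e % 2 = 0)
    (hem : e < m) : (headOrder m)^[e + 1] 0 = headOrder m e := by
  rw [iterate_succ_apply', iterate_headOrder_zero_of_even he hem]

theorem isPeriodicPt_headOrder_zero (hm : 2 ≤ m) (hm2 : m % 2 = 0) :
    IsPeriodicPt (headOrder m) m 0 := by
  have hm' : m - 2 + 1 + 1 = m := by omega
  rw [IsPeriodicPt, IsFixedPt, ← hm', iterate_succ_apply', hm',
    iterate_headOrder_zero_succ_of_even (by omega) (by omega)]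
  unfold headOrder; split_ifs <;> omega

theorem exists_iterate_headOrder_zero_eq (hm : 2 ≤ m) (hm2 : m % 2 = 0) {s : ℕ} (hs : s < m) :
    ∃ u, (headOrder m)^[u] 0 = s := by
  rcases Nat.mod_two_eq_zero_or_one s with he | ho
  · exact ⟨s, iterate_headOrder_zero_of_even he hs⟩
  · by_cases h1 : s = 1
    · refine ⟨m - 2 + 1, ?_⟩
      rw [iterate_headOrder_zero_succ_of_even (by omega) (by omega)]
      unfold headOrder; split_ifs <;> omega
    · refine ⟨s - 3 + 1, ?_⟩
      rw [iterate_headOrder_zero_succ_of_even (by omega) (by omega)]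
      unfold headOrder; split_ifs <;> omega

theorem surjOn_headOrder (hm : 2 ≤ m) (hm2 : m % 2 = 0) :
    SurjOn (headOrder m) (Iio m) (Iio m) :=
  surjOn_of_isPeriodicPt (mapsTo_headOrder hm2) (by simp only [mem_Iio]; omega)
    (isPeriodicPt_headOrder_zero hm hm2) (by omega)
    fun _ hs => exists_iterate_headOrder_zero_eq hm hm2 hs

end HeadOrder

section WorstCasePerm

variable {m : ℕ}

theorem worstCasePerm_of_lt {t : ℕ} (ht : t < m) :
    worstCasePerm m t = (m - 1) * m + headOrder m t := if_pos ht

theorem worstCasePerm_of_le {x : ℕ} (hx : m ≤ x) : worstCasePerm m x = x - m :=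
  if_neg (Nat.not_lt.mpr hx)

theorem iterate_worstCasePerm_of_mul_le {k x : ℕ} (h : k * m ≤ x) :
    (worstCasePerm m)^[k] x = x - k * m := by
  induction k generalizing x with
  | zero => simp
  | succ k ih =>
    rw [Nat.succ_mul] at h
    rw [iterate_succ_apply, worstCasePerm_of_le (by omega), ih (by omega), Nat.succ_mul]
    omega

theorem iterate_succ_worstCasePerm_of_lt {t k : ℕ} (ht : t < m) (hk : k < m) :
    (worstCasePerm m)^[k + 1] t = (m - 1 - k) * m + headOrder m t := by
  have hkm : k * m ≤ (m - 1) * m := Nat.mul_le_mul_right m (by omega)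
  rw [iterate_succ_apply, worstCasePerm_of_lt ht,
    iterate_worstCasePerm_of_mul_le (by omega), Nat.sub_mul (m - 1) k m]
  omega

theorem iterate_worstCasePerm_of_lt {t : ℕ} (ht : t < m) :
    (worstCasePerm m)^[m] t = headOrder m t := by
  have h := iterate_succ_worstCasePerm_of_lt ht (k := m - 1) (by omega)
  rwa [Nat.sub_add_cancel (by omega), Nat.sub_self, zero_mul, zero_add] at h

theorem iterate_mul_worstCasePerm (hm2 : m % 2 = 0) {t : ℕ} (ht : t < m) (u : ℕ) :
    (worstCasePerm m)^[m * u] t = (headOrder m)^[u] t := by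
  induction u with
  | zero => rfl
  | succ u ih =>
    have hu : (headOrder m)^[u] t < m := (mapsTo_headOrder hm2).iterate u ht
    rw [Nat.mul_succ, add_comm, iterate_add_apply, ih, iterate_worstCasePerm_of_lt hu,
      iterate_succ_apply']

theorem mapsTo_worstCasePerm (hm2 : m % 2 = 0) :
    MapsTo (worstCasePerm m) (Iio (m * m)) (Iio (m * m)) := by
  intro x hx
  simp only [mem_Iio] at hx ⊢
  rcases lt_or_ge x m with h | h
  · have hmm : (m - 1) * m + m = m * m := by
      rw [← Nat.succ_mul, Nat.succ_eq_add_one, Nat.sub_add_cancel (by omega)]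
    have := mapsTo_headOrder hm2 h
    simp only [mem_Iio] at this
    rw [worstCasePerm_of_lt h]; omega
  · rw [worstCasePerm_of_le h]; omega

theorem isPeriodicPt_worstCasePerm_zero (hm : 2 ≤ m) (hm2 : m % 2 = 0) :
    IsPeriodicPt (worstCasePerm m) (m * m) 0 :=
  (iterate_mul_worstCasePerm hm2 (by omega) m).trans (isPeriodicPt_headOrder_zero hm hm2)

theorem exists_iterate_worstCasePerm_zero_eq (hm : 2 ≤ m) (hm2 : m % 2 = 0) {y : ℕ}
    (hy : y < m * m) : ∃ k, (worstCasePerm m)^[k] 0 = y := by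
  have hq : y / m < m := Nat.div_lt_of_lt_mul hy
  obtain ⟨t, ht, hts⟩ :=
    surjOn_headOrder hm hm2 (show y % m ∈ Iio m from Nat.mod_lt _ (by omega))
  obtain ⟨u, hu⟩ := exists_iterate_headOrder_zero_eq hm hm2 ht
  have hm0 : 0 < m := by omega
  have hk : m - 1 - y / m < m := (Nat.sub_le _ _).trans_lt (by omega)
  refine ⟨m - 1 - y / m + 1 + m * u, ?_⟩
  rw [iterate_add_apply, iterate_mul_worstCasePerm hm2 hm0, hu,
    iterate_succ_worstCasePerm_of_lt ht hk, hts,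
    Nat.sub_sub_self (Nat.le_sub_one_of_lt hq), mul_comm]
  exact Nat.div_add_mod y m

theorem exists_iterate_worstCasePerm_eq (hm : 2 ≤ m) (hm2 : m % 2 = 0) :
    ∀ x < m * m, ∀ y < m * m, ∃ k, (worstCasePerm m)^[k] x = y := by
  intro x hx y hy
  obtain ⟨i, rfl⟩ := exists_iterate_worstCasePerm_zero_eq hm hm2 hx
  obtain ⟨j, rfl⟩ := exists_iterate_worstCasePerm_zero_eq hm hm2 hy
  exact exists_iterate_apply_eq_of_isPeriodicPt (isPeriodicPt_worstCasePerm_zero hm hm2)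
    (by positivity) i j

theorem bijOn_worstCasePerm (hm : 2 ≤ m) (hm2 : m % 2 = 0) :
    BijOn (worstCasePerm m) (Iio (m * m)) (Iio (m * m)) :=
  (finite_Iio _).surjOn_iff_bijOn_of_mapsTo (mapsTo_worstCasePerm hm2) |>.mp <|
    surjOn_of_isPeriodicPt (mapsTo_worstCasePerm hm2) (by simp only [mem_Iio]; positivity)
      (isPeriodicPt_worstCasePerm_zero hm hm2) (by positivity)
      fun _ hy => exists_iterate_worstCasePerm_zero_eq hm hm2 hy

theorem worstCasePerm_sub_one_add_one {i : ℕ} (hi : m < i) :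
    worstCasePerm m (i - 1) + 1 = worstCasePerm m i := by
  rw [worstCasePerm_of_le (by omega), worstCasePerm_of_le hi.le]
  omega

theorem isRunStart_worstCasePerm (hm4 : m ≠ 4) {i : ℕ} (hi : i ≤ m) :
    i = 0 ∨ worstCasePerm m (i - 1) + 1 ≠ worstCasePerm m i := by
  rcases Nat.eq_zero_or_pos i with rfl | hi0
  · exact Or.inl rfl
  right
  rcases hi.lt_or_eq with him | rfl
  · have h := headOrder_add_one_ne hm4 (j := i - 1) (by omega)
    rw [Nat.sub_add_cancel hi0] at h
    rw [worstCasePerm_of_lt (by omega), worstCasePerm_of_lt him]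
    omega
  · rw [worstCasePerm_of_le le_rfl, Nat.sub_self]
    exact Nat.succ_ne_zero _

theorem runStarts_worstCasePerm (hm : 2 ≤ m) (hm4 : m ≠ 4) :
    runStarts (m * m) (worstCasePerm m) = Finset.range (m + 1) := by
  have hmm : m < m * m := by nlinarith
  ext i
  simp only [runStarts, Finset.mem_filter, Finset.mem_range]
  by_cases hi : i ≤ m
  · exact iff_of_true ⟨by omega, isRunStart_worstCasePerm hm4 hi⟩ (by omega)
  · refine iff_of_false ?_ (by omega)
    rintro ⟨-, h0 | hne⟩
    · omega
    · exact hne (worstCasePerm_sub_one_add_one (by omega))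

theorem ffQuery_worstCasePerm_of_two_mul_le (hm : 2 ≤ m) (hm4 : m ≠ 4) {i : ℕ}
    (hi : 2 * m ≤ i) : ffQuery (m * m) (worstCasePerm m) i = m := by
  rw [ffQuery_of_runStarts_eq_range (runStarts_worstCasePerm hm hm4),
    min_eq_right (by omega : m ≤ i), worstCasePerm_of_le le_rfl, Nat.sub_self, Nat.zero_min,
    Nat.sub_zero, worstCasePerm_of_le (by omega : m ≤ i), min_eq_right (by omega : m ≤ i - m)]

theorem le_four_mul_sum_ffQuery_worstCasePerm (hm : 3 ≤ m) (hm4 : m ≠ 4) :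
    m * m * (m + 1) ≤ 4 * ∑ i ∈ Finset.range (m * m), ffQuery (m * m) (worstCasePerm m) i := by
  have hmm : 2 * m ≤ m * m := by nlinarith
  have hIco : (m * m - 2 * m) * m
      = ∑ i ∈ Finset.Ico (2 * m) (m * m), ffQuery (m * m) (worstCasePerm m) i := by
    rw [Finset.sum_congr rfl fun i hi => ffQuery_worstCasePerm_of_two_mul_le (by omega) hm4
      (Finset.mem_Ico.mp hi).1, Finset.sum_const, Nat.card_Ico, smul_eq_mul]
  have hsub : Finset.Ico (2 * m) (m * m) ⊆ Finset.range (m * m) := by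
    rw [Finset.range_eq_Ico]; exact Finset.Ico_subset_Ico_left (Nat.zero_le _)
  calc m * m * (m + 1) ≤ 4 * ((m * m - 2 * m) * m) := by
        zify [hmm]; nlinarith
    _ ≤ _ := by rw [hIco]; exact Nat.mul_le_mul_left 4 (Finset.sum_le_sum_of_subset hsub)

end WorstCasePerm

/-- Brown–Gagie–Rossi worst case: for infinitely many `n` there is a single-cycle
permutation with `r ∈ Θ(√n)` runs whose total fast-forward count over all `n` distinct
move queries is `Θ(n·r)`. -/
theorem statement_17 :
    ∃ C₁ C₂ C₃ C₄ : ℝ, 0 < C₁ ∧ 0 < C₂ ∧ 0 < C₃ ∧ 0 < C₄ ∧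
      ∀ N : ℕ, ∃ n : ℕ, N < n ∧ ∃ π : ℕ → ℕ,
        Set.BijOn π (Set.Iio n) (Set.Iio n) ∧
        (∀ x < n, ∀ y < n, ∃ k : ℕ, π^[k] x = y) ∧
        C₁ * Real.sqrt n ≤ ((runStarts n π).card : ℝ) ∧
        ((runStarts n π).card : ℝ) ≤ C₂ * Real.sqrt n ∧
        C₃ * n * ((runStarts n π).card : ℝ)
          ≤ ((∑ i ∈ Finset.range n, ffQuery n π i : ℕ) : ℝ) ∧
        ((∑ i ∈ Finset.range n, ffQuery n π i : ℕ) : ℝ)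
          ≤ C₄ * n * ((runStarts n π).card : ℝ) := by
  refine ⟨1, 2, 1 / 4, 1, one_pos, two_pos, by norm_num, one_pos, fun N => ?_⟩
  obtain ⟨m, hmN⟩ : ∃ m, m = 2 * N + 6 := ⟨_, rfl⟩
  have hm : 2 ≤ m := by omega
  have hm2 : m % 2 = 0 := by omega
  have hm4 : m ≠ 4 := by omega
  refine ⟨m * m, by nlinarith, worstCasePerm m, bijOn_worstCasePerm hm hm2,
    exists_iterate_worstCasePerm_eq hm hm2, ?_⟩
  have hlower : ((m * m * (m + 1) : ℕ) : ℝ)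
      ≤ 4 * ((∑ i ∈ Finset.range (m * m), ffQuery (m * m) (worstCasePerm m) i : ℕ) : ℝ) :=
    mod_cast le_four_mul_sum_ffQuery_worstCasePerm (by omega) hm4
  have hupper : ((∑ i ∈ Finset.range (m * m), ffQuery (m * m) (worstCasePerm m) i : ℕ) : ℝ)
      ≤ ((m * m * m : ℕ) : ℝ) :=
    mod_cast sum_ffQuery_le_of_runStarts_eq_range (runStarts_worstCasePerm hm hm4)
  have hm6 : (6 : ℝ) ≤ m := by exact_mod_cast (show 6 ≤ m by omega)
  rw [runStarts_worstCasePerm hm hm4, Finset.card_range, Nat.cast_mul,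
    Real.sqrt_mul_self (Nat.cast_nonneg m)]
  push_cast at hlower hupper ⊢
  refine ⟨by linarith, by linarith, by linarith, by nlinarith⟩
end

section
/- Let π be a permutation of {0,…,n−1} and let S' ⊇ S be any superset of the run starts of π obtained by splitting runs (so positions in each piece of S' still permute contiguously). Then the predecessor-based evaluation remains correct: for any i, letting i' be the largest element of S' with i' ≤ i, π(i) = π(i') + (i − i'). -/
theorem apply_pred_add_one_of_notMem_runStarts {n : ℕ} {π : ℕ → ℕ} {j : ℕ} (hjn : j < n)
    (hj : j ∉ runStarts n π) : π (j - 1) + 1 = π j := by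
  by_contra hne
  exact hj (Finset.mem_filter.mpr ⟨Finset.mem_range.mpr hjn, Or.inr hne⟩)

theorem apply_eq_add_sub_of_succ_steps {π : ℕ → ℕ} {a b : ℕ} (hab : a ≤ b)
    (hstep : ∀ j, a < j → j ≤ b → π (j - 1) + 1 = π j) : π b = π a + (b - a) := by
  induction b, hab using Nat.le_induction with
  | base => simp
  | succ k hak ih =>
    have hk := ih fun j h₁ h₂ => hstep j h₁ (by omega)
    have hsucc := hstep (k + 1) (by omega) le_rfl
    simp only [Nat.add_sub_cancel] at hsucc
    omega

theorem statement_19_general (n : ℕ) (π : ℕ → ℕ)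
    (S' : Finset ℕ) (hsup : runStarts n π ⊆ S')
    (i : ℕ) (hi : i < n) (i' : ℕ)
    (hi'le : i' ≤ i)
    (hmax : ∀ s ∈ S', s ≤ i → s ≤ i') :
    π i = π i' + (i - i') := by
  refine apply_eq_add_sub_of_succ_steps hi'le fun j hi'j hji => ?_
  have hjS : j ∉ S' := fun hj => absurd (hmax j hj hji) (by omega)
  exact apply_pred_add_one_of_notMem_runStarts (by omega) fun hj => hjS (hsup hj)

/-- Predecessor-based evaluation remains correct for any superset `S'` of the run
starts (i.e. after arbitrarily splitting runs): for `i' = max {s ∈ S' : s ≤ i}`,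
`π i = π i' + (i − i')`. -/
theorem statement_19 (n : ℕ) (hn : 0 < n) (π : ℕ → ℕ)
    (hπ : Set.BijOn π (Set.Iio n) (Set.Iio n))
    (S' : Finset ℕ) (hsup : runStarts n π ⊆ S') (hsub : S' ⊆ Finset.range n)
    (i : ℕ) (hi : i < n) (i' : ℕ)
    (hi'S : i' ∈ S') (hi'le : i' ≤ i)
    (hmax : ∀ s ∈ S', s ≤ i → s ≤ i') :
    π i = π i' + (i - i') :=
  statement_19_general n π S' hsup i hi i' hi'le hmax
end
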